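/- Let k and ℓ be positive integers and let G be a graph in the family 𝒞_{k,ℓ}, with C(G) denoting its original cycle vertices. Then the subgraph of G induced on C(G) is an isometric subgraph of G; that is, for every pair of cycle vertices u, v ∈ C(G), the distance between u and v in G equals their distance in the cycle C_k. -/

import Mathlib

open SimpleGraph

/-- `G[A]` is an isometric subgraph of `G`: it is connected and distances
within `G[A]` agree with distances in `G`. -/
def IsIsomSub {V : Type*} (G : SimpleGraph V) (A : Set V) : Prop :=
  (G.induce A).Connected ∧
    ∀ u v : A, (G.induce A).dist u v = G.dist (u : V) (v : V)

/-- `G` belongs to the family `𝒞_{k,ℓ}`: the cycle vertices `Sum.inl i`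
induce the cycle `C_k`, the `ℓ` added vertices `Sum.inr a` form an
independent set, and each added vertex is joined to at least one cycle
vertex, all its cycle neighbours lying among three consecutive cycle
vertices `v_{i-1}, v_i, v_{i+1}` (indices mod `k`). -/
def MemCkl (k l : ℕ) (G : SimpleGraph (Fin k ⊕ Fin l)) : Prop :=
  (∀ i j : Fin k, G.Adj (Sum.inl i) (Sum.inl j) ↔ (cycleGraph k).Adj i j) ∧
  (∀ a b : Fin l, ¬ G.Adj (Sum.inr a) (Sum.inr b)) ∧
  (∀ a : Fin l,
    (∃ j : Fin k, G.Adj (Sum.inr a) (Sum.inl j)) ∧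
    ∃ i : Fin k, ∀ j : Fin k, G.Adj (Sum.inr a) (Sum.inl j) →
      ((j : ℕ) + 1) % k = (i : ℕ) ∨ j = i ∨ ((i : ℕ) + 1) % k = (j : ℕ))

/-!
Fixing the cycle vertices and sending each added vertex to the centre `v_i` of its window
`v_{i-1}, v_i, v_{i+1}` defines a retraction of `G` onto `C_k` that maps every edge to an edge
or collapses it to a vertex. Such a weak homomorphism does not increase distances, while the
inclusion `C_k ⊆ G` does not increase them either, so the two distances agree.
-/

namespace SimpleGraph

variable {V W : Type*} {G : SimpleGraph V} {H : SimpleGraph W}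

def IsWeakHom (G : SimpleGraph V) (H : SimpleGraph W) (f : V → W) : Prop :=
  ∀ ⦃u v : V⦄, G.Adj u v → f u = f v ∨ H.Adj (f u) (f v)

lemma Hom.isWeakHom (φ : G →g H) : IsWeakHom G H φ :=
  fun _ _ huv => Or.inr (φ.map_adj huv)

namespace IsWeakHom

variable {f : V → W}

lemma exists_walk_length_le (hf : IsWeakHom G H f) {u v : V} (p : G.Walk u v) :
    ∃ q : H.Walk (f u) (f v), q.length ≤ p.length := by
  induction p with
  | nil => exact ⟨.nil, le_rfl⟩
  | cons huv _ ih =>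
    obtain ⟨q, hq⟩ := ih
    rcases hf huv with heq | hadj
    · exact ⟨q.copy heq.symm rfl, by simpa using Nat.le_succ_of_le hq⟩
    · exact ⟨.cons hadj q, by simpa using hq⟩

lemma reachable (hf : IsWeakHom G H f) {u v : V} (h : G.Reachable u v) :
    H.Reachable (f u) (f v) :=
  let ⟨p⟩ := h
  ⟨(hf.exists_walk_length_le p).choose⟩

lemma dist_le (hf : IsWeakHom G H f) {u v : V} (h : G.Reachable u v) :
    H.dist (f u) (f v) ≤ G.dist u v := by
  obtain ⟨p, hp⟩ := h.exists_walk_length_eq_dist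
  obtain ⟨q, hq⟩ := hf.exists_walk_length_le p
  exact (SimpleGraph.dist_le q).trans (hp ▸ hq)

end IsWeakHom

lemma Embedding.dist_eq_of_retraction (φ : H ↪g G) {r : V → W} (hr : ∀ w, r (φ w) = w)
    (hrw : IsWeakHom G H r) (u v : W) : G.dist (φ u) (φ v) = H.dist u v := by
  by_cases h : H.Reachable u v
  · refine le_antisymm (φ.toHom.isWeakHom.dist_le h) ?_
    simpa only [hr] using hrw.dist_le (u := φ u) (v := φ v) (h.map φ.toHom)
  · have h' : ¬G.Reachable (φ u) (φ v) := fun h' => h <| by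
      simpa only [hr] using hrw.reachable h'
    rw [dist_eq_zero_of_not_reachable h, dist_eq_zero_of_not_reachable h']

lemma Iso.dist_eq (e : G ≃g H) (u v : V) : H.dist (e u) (e v) = G.dist u v :=
  e.toEmbedding.dist_eq_of_retraction e.symm_apply_apply e.symm.toHom.isWeakHom u v

end SimpleGraph

lemma isIsomSub_range_of_retraction {V W : Type*} {G : SimpleGraph V} {H : SimpleGraph W}
    (hH : H.Connected) (φ : H ↪g G) {r : V → W} (hr : ∀ w, r (φ w) = w)
    (hrw : IsWeakHom G H r) : IsIsomSub G (Set.range φ) := by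
  refine ⟨φ.isoInduceRange.connected_iff.mp hH, ?_⟩
  rintro ⟨_, u, rfl⟩ ⟨_, v, rfl⟩
  exact (φ.isoInduceRange.dist_eq u v).trans (φ.dist_eq_of_retraction hr hrw u v).symm

lemma cycleGraph_connected_of_pos {k : ℕ} (hk : 0 < k) : (cycleGraph k).Connected := by
  obtain ⟨n, rfl⟩ : ∃ n, k = n + 1 := ⟨k - 1, by omega⟩
  exact cycleGraph_connected

lemma cycleGraph_eq_or_adj_of_window {k : ℕ} {i j : Fin k}
    (h : ((j : ℕ) + 1) % k = (i : ℕ) ∨ j = i ∨ ((i : ℕ) + 1) % k = (j : ℕ)) :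
    i = j ∨ (cycleGraph k).Adj i j := by
  match k with
  | 0 => exact i.elim0
  | 1 => exact Or.inl (Subsingleton.elim i j)
  | n + 2 =>
    rcases h with h | h | h
    · have hij : i = j + 1 := Fin.ext (by simpa [Fin.val_add] using h.symm)
      exact Or.inr (cycleGraph_adj.mpr (Or.inl (by rw [hij, add_sub_cancel_left])))
    · exact Or.inl h.symm
    · have hji : j = i + 1 := Fin.ext (by simpa [Fin.val_add] using h.symm)
      exact Or.inr (cycleGraph_adj.mpr (Or.inr (by rw [hji, add_sub_cancel_left])))

namespace MemCkl

variable {k l : ℕ} {G : SimpleGraph (Fin k ⊕ Fin l)} (hG : MemCkl k l G)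

def cycleEmbedding : cycleGraph k ↪g G where
  toFun := Sum.inl
  inj' := Sum.inl_injective
  map_rel_iff' := hG.1 _ _

noncomputable def retraction : Fin k ⊕ Fin l → Fin k :=
  Sum.elim id fun a => (hG.2.2 a).2.choose

lemma isWeakHom_retraction : IsWeakHom G (cycleGraph k) hG.retraction := by
  have hcentre (a : Fin l) (j : Fin k) (h : G.Adj (.inr a) (.inl j)) :
      hG.retraction (.inr a) = j ∨ (cycleGraph k).Adj (hG.retraction (.inr a)) j :=
    cycleGraph_eq_or_adj_of_window ((hG.2.2 a).2.choose_spec j h)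
  rintro (i | a) (j | b) h
  · exact Or.inr ((hG.1 i j).mp h)
  · exact (hcentre b i h.symm).imp Eq.symm Adj.symm
  · exact hcentre a j h
  · exact (hG.2.1 a b h).elim

end MemCkl

theorem ckl_cycle_isometric_general (k l : ℕ) (hk : 0 < k)
    (G : SimpleGraph (Fin k ⊕ Fin l)) (hG : MemCkl k l G) :
    IsIsomSub G (Set.range Sum.inl) ∧
      ∀ i j : Fin k,
        G.dist (Sum.inl i) (Sum.inl j) = (cycleGraph k).dist i j := by
  have hr : ∀ i, hG.retraction (hG.cycleEmbedding i) = i := fun _ => rfl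
  exact ⟨isIsomSub_range_of_retraction (cycleGraph_connected_of_pos hk) hG.cycleEmbedding hr
      hG.isWeakHom_retraction,
    hG.cycleEmbedding.dist_eq_of_retraction hr hG.isWeakHom_retraction⟩

/-- For any `G ∈ 𝒞_{k,ℓ}`, the subgraph induced on the original cycle
vertices `C(G)` is an isometric subgraph of `G`; that is, the distance in
`G` between any two cycle vertices equals their distance in the cycle
`C_k`. -/
theorem ckl_cycle_isometric (k l : ℕ) (hk : 0 < k) (hl : 0 < l)
    (G : SimpleGraph (Fin k ⊕ Fin l)) (hG : MemCkl k l G) :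
    IsIsomSub G (Set.range Sum.inl) ∧
      ∀ i j : Fin k,
        G.dist (Sum.inl i) (Sum.inl j) = (cycleGraph k).dist i j :=
  ckl_cycle_isometric_general k l hk G hG
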